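/- Let f: ℝ × ℝ → ℝ be f(x, y) = −0.1x² − 0.5y² + 0.5xy. Then (0,0) is a critical point of f that is not a local saddle point of f, and yet for η = 0.7, τ = 1, γ = 0.2 every complex eigenvalue of the GEG Jacobian J(0,0) has modulus strictly less than 1; hence (0,0) is an asymptotically stable equilibrium of the GEG dynamics that is not a saddle point. -/

import Mathlib

open Matrix MeasureTheory

noncomputable section

abbrev Spc (n m : ℕ) : Type := EuclideanSpace ℝ (Fin n ⊕ Fin m)

variable {n m : ℕ}

def ofVec (v : (Fin n ⊕ Fin m) → ℝ) : Spc n m := (WithLp.equiv 2 _).symm v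

def mulVecE (A : Matrix (Fin n ⊕ Fin m) (Fin n ⊕ Fin m) ℝ) (v : Spc n m) : Spc n m :=
  ofVec (A.mulVec v)

def Fvec (f : Spc n m → ℝ) (z : Spc n m) : Spc n m :=
  ofVec (Sum.elim (fun i => gradient f z (Sum.inl i)) (fun j => - gradient f z (Sum.inr j)))

def Lam (n m : ℕ) (τ : ℝ) : Matrix (Fin n ⊕ Fin m) (Fin n ⊕ Fin m) ℝ :=
  Matrix.diagonal (Sum.elim (fun _ => 1/τ) (fun _ => 1))

def hess (f : Spc n m → ℝ) (z : Spc n m) : Matrix (Fin n ⊕ Fin m) (Fin n ⊕ Fin m) ℝ :=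
  Matrix.of fun i j => gradient (fun w => gradient f w j) z i

def Hmat (f : Spc n m → ℝ) (z : Spc n m) : Matrix (Fin n ⊕ Fin m) (Fin n ⊕ Fin m) ℝ :=
  Matrix.diagonal (Sum.elim (fun _ => (-1:ℝ)) (fun _ => 1)) * hess f z

def geg (f : Spc n m → ℝ) (η τ γ : ℝ) (z : Spc n m) : Spc n m :=
  z - (γ * η) • mulVecE (Lam n m τ) (Fvec f (z - η • mulVecE (Lam n m τ) (Fvec f z)))

def Jmat (f : Spc n m → ℝ) (η τ γ : ℝ) (z : Spc n m) :
    Matrix (Fin n ⊕ Fin m) (Fin n ⊕ Fin m) ℝ :=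
  1 + (γ * η) • ((Lam n m τ * Hmat f (z - η • mulVecE (Lam n m τ) (Fvec f z))) *
      (1 + η • (Lam n m τ * Hmat f z)))

def withX (z u : Spc n m) : Spc n m :=
  ofVec (Sum.elim (fun i => z (Sum.inl i)) (fun j => u (Sum.inr j)))

def IsLocalSaddle (f : Spc n m → ℝ) (z : Spc n m) : Prop :=
  ∃ U ∈ nhds z, ∀ u ∈ U, f (withX z u) ≤ f z ∧ f z ≤ f (withX u z)

def cSpec (A : Matrix (Fin n ⊕ Fin m) (Fin n ⊕ Fin m) ℝ) : Set ℂ :=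
  spectrum ℂ (A.map (algebraMap ℝ ℂ))


def AsympStable (w : Spc n m → Spc n m) (ze : Spc n m) : Prop :=
  (∀ ε > 0, ∃ δ > 0, ∀ z₀ : Spc n m, dist z₀ ze ≤ δ → ∀ k : ℕ, dist (w^[k] z₀) ze ≤ ε) ∧
  ∃ δ > 0, ∀ z₀ : Spc n m, dist z₀ ze ≤ δ →
    Filter.Tendsto (fun k => w^[k] z₀) Filter.atTop (nhds ze)

/- ### auxiliary material -/

local notation "iL" => (Sum.inl 0 : Fin 1 ⊕ Fin 1)
local notation "iR" => (Sum.inr 0 : Fin 1 ⊕ Fin 1)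

lemma ofVec_apply (v : (Fin 1 ⊕ Fin 1) → ℝ) (i : Fin 1 ⊕ Fin 1) :
    ofVec v i = v i := rfl

lemma hasGrad (a b c d e : ℝ) (z : Spc 1 1) :
    HasGradientAt (fun w : Spc 1 1 => a * (w iL * w iL) + b * (w iR * w iR) +
        c * (w iL * w iR) + (d * w iL + e * w iR))
      (ofVec (Sum.elim (fun _ => 2*a*z iL + c*z iR + d) (fun _ => 2*b*z iR + c*z iL + e))) z := by
  rw [hasGradientAt_iff_hasFDerivAt]
  have h1 : HasFDerivAt (fun w : Spc 1 1 => w iL) (EuclideanSpace.proj (𝕜 := ℝ) iL) z := by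
    exact (EuclideanSpace.proj (𝕜 := ℝ) iL).hasFDerivAt
  have h2 : HasFDerivAt (fun w : Spc 1 1 => w iR) (EuclideanSpace.proj (𝕜 := ℝ) iR) z := by
    exact (EuclideanSpace.proj (𝕜 := ℝ) iR).hasFDerivAt
  have H := ((((h1.mul h1).const_mul a).add (((h2.mul h2)).const_mul b)).add
      (((h1.mul h2).const_mul c))).add (((h1.const_mul d)).add (h2.const_mul e))
  refine (H.congr_fderiv ?_)
  refine ContinuousLinearMap.ext fun v => ?_
  simp [InnerProductSpace.toDual_apply_apply, PiLp.inner_apply, Fintype.sum_sum_type,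
    ofVec, RCLike.inner_apply]
  ring

def Vq (x y : ℝ) : ℝ := (272989/1000)*x^2 + 2*(-63309/500)*x*y + (14401/200)*y^2

/-- key Lyapunov decrease certificate -/
lemma lyap_dec (x y X Y : ℝ) (hX : X = (50371/50000)*x + (-77/2500)*y)
    (hY : Y = (77/2500)*x + (1867/2000)*y) :
    Vq X Y ≤ (199/200)^2 * Vq x y := by
  subst hX hY
  unfold Vq
  nlinarith [sq_nonneg ((2499959231791/2500000000000)*x + (1686461/250000000000)*y), sq_nonneg y]

lemma lyap_low (x y : ℝ) :
    10*(x^2+y^2) ≤ Vq x y := by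
  unfold Vq
  nlinarith [sq_nonneg ((272989/1000 - 10)*x + (-63309/500)*y), sq_nonneg y]

lemma lyap_up (x y : ℝ) :
    Vq x y ≤ 340*(x^2+y^2) := by
  unfold Vq
  nlinarith [sq_nonneg ((340 - 272989/1000)*x - (-63309/500)*y), sq_nonneg y]

lemma norm_sq_eq (w : Spc 1 1) : ‖w‖^2 = (w iL)^2 + (w iR)^2 := by
  rw [EuclideanSpace.norm_eq, Real.sq_sqrt (by positivity)]
  simp [Fintype.sum_sum_type, sq_abs]

set_option maxHeartbeats 2000000

theorem stmt16 (f : Spc 1 1 → ℝ)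
    (hf : f = fun z => -0.1 * z (Sum.inl 0) ^ 2 - 0.5 * z (Sum.inr 0) ^ 2 +
      0.5 * z (Sum.inl 0) * z (Sum.inr 0))
    (η τ γ : ℝ) (hη : η = 0.7) (hτ : τ = 1) (hγ : γ = 0.2) :
    gradient f 0 = 0 ∧
    ¬ IsLocalSaddle f 0 ∧
    (∀ κ ∈ cSpec (Jmat f η τ γ 0), ‖κ‖ < 1) ∧
    AsympStable (geg f η τ γ) 0 := by
  subst hη hτ hγ
  -- gradient formula
  have hfe : f = (fun w : Spc 1 1 => (-(1/10):ℝ) * (w iL * w iL) + (-(1/2)) * (w iR * w iR) +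
      (1/2) * (w iL * w iR) + (0 * w iL + 0 * w iR)) := by
    rw [hf]; funext w; norm_num; ring
  have hgrad : ∀ z : Spc 1 1, gradient f z =
      ofVec (Sum.elim (fun _ => -(1/5)*z iL + (1/2)*z iR) (fun _ => (1/2)*z iL - z iR)) := by
    intro z
    rw [hfe, (hasGrad (-(1/10)) (-(1/2)) (1/2) 0 0 z).gradient]
    ext i
    rcases i with i | i <;>
      simp only [ofVec_apply, Sum.elim_inl, Sum.elim_inr] <;> ring
  have hzero : ∀ i : Fin 1 ⊕ Fin 1, (0 : Spc 1 1) i = 0 := fun _ => rfl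
  have hgrad0 : gradient f 0 = 0 := by
    rw [hgrad]
    ext i
    rcases i with i | i <;> simp [ofVec, hzero]
  refine ⟨hgrad0, ?_, ?_, ?_⟩
  · -- not a local saddle
    rintro ⟨U, hU, hsad⟩
    obtain ⟨ε, hε, hball⟩ := Metric.mem_nhds_iff.mp hU
    set u : Spc 1 1 := ofVec (Sum.elim (fun _ => ε/2) (fun _ => 0)) with hu
    have huU : u ∈ U := by
      apply hball
      rw [Metric.mem_ball, dist_zero_right]
      have : ‖u‖^2 = (ε/2)^2 := by
        rw [norm_sq_eq]; simp [hu, ofVec_apply]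
      have h2 : ‖u‖ = ε/2 := by
        nlinarith [norm_nonneg u, hε]
      rw [h2]; linarith
    have h0 : f 0 = 0 := by rw [hf]; simp [hzero]
    have hle := (hsad u huU).2
    have hw : f (withX u 0) = -0.1 * (ε/2)^2 := by
      simp only [hf]
      have h1 : (withX u 0) iL = ε/2 := by simp [withX, ofVec_apply, hu]
      have h2 : (withX u 0) iR = 0 := by simp [withX, ofVec_apply, hzero]
      rw [h1, h2]; ring
    rw [h0, hw] at hle
    nlinarith [hε]
  · -- spectrum
    intro kk hk
    have hhess : ∀ z : Spc 1 1, hess f z = Matrix.of (fun i j =>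
        Sum.elim (fun _ => Sum.elim (fun _ => (-(1/5):ℝ)) (fun _ => 1/2) j)
                 (fun _ => Sum.elim (fun _ => ((1/2):ℝ)) (fun _ => -1) j) i) := by
      intro z
      ext i j
      simp only [hess, Matrix.of_apply]
      rcases j with j | j
      · have hfun : (fun w : Spc 1 1 => gradient f w (Sum.inl j)) =
            fun w => 0*(w iL*w iL) + 0*(w iR*w iR) + 0*(w iL*w iR) +
              ((-(1/5))*w iL + (1/2)*w iR) := by
          funext w
          rw [hgrad w]
          simp only [ofVec_apply, Sum.elim_inl]
          ring
        rw [hfun, (hasGrad 0 0 0 (-(1/5)) (1/2) z).gradient]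
        rcases i with i | i <;>
          simp only [ofVec_apply, Sum.elim_inl, Sum.elim_inr] <;> ring
      · have hfun : (fun w : Spc 1 1 => gradient f w (Sum.inr j)) =
            fun w => 0*(w iL*w iL) + 0*(w iR*w iR) + 0*(w iL*w iR) +
              ((1/2)*w iL + (-1)*w iR) := by
          funext w
          rw [hgrad w]
          simp only [ofVec_apply, Sum.elim_inr]
          ring
        rw [hfun, (hasGrad 0 0 0 (1/2) (-1) z).gradient]
        rcases i with i | i <;>
          simp only [ofVec_apply, Sum.elim_inl, Sum.elim_inr] <;> ring
    have hLam : Lam 1 1 1 = 1 := by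
      have he : (Sum.elim (fun _ => 1/(1:ℝ)) (fun _ => 1) : (Fin 1 ⊕ Fin 1) → ℝ) =
          fun _ => 1 := by
        funext i; rcases i with i | i <;> norm_num
      rw [Lam, he, Matrix.diagonal_one]
    have hJ : Jmat f 0.7 1 0.2 0 = Matrix.of (fun i j =>
        Sum.elim (fun _ => Sum.elim (fun _ => ((50371:ℝ)/50000)) (fun _ => -77/2500) j)
                 (fun _ => Sum.elim (fun _ => ((77:ℝ)/2500)) (fun _ => 1867/2000) j) i) := by
      ext i j
      simp only [Jmat, hLam, one_mul, Hmat, hhess, Matrix.add_apply, Matrix.smul_apply,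
        Matrix.mul_apply, Matrix.one_apply, Matrix.diagonal_mul, Matrix.of_apply,
        Fintype.sum_sum_type, Finset.univ_unique, Finset.sum_singleton, smul_eq_mul,
        Fin.sum_univ_one, Fin.default_eq_zero]
      rcases i with i | i <;> rcases j with j | j <;> fin_cases i <;> fin_cases j <;>
        simp [Sum.elim_inl, Sum.elim_inr, Matrix.one_apply, Matrix.diagonal_apply] <;>
        norm_num
    rw [cSpec, hJ] at hk
    have hnu := spectrum.mem_iff.mp hk
    set M := algebraMap ℂ (Matrix (Fin 1 ⊕ Fin 1) (Fin 1 ⊕ Fin 1) ℂ) kk -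
      (Matrix.of (fun i j =>
        Sum.elim (fun _ => Sum.elim (fun _ => ((50371:ℝ)/50000)) (fun _ => -77/2500) j)
                 (fun _ => Sum.elim (fun _ => ((77:ℝ)/2500)) (fun _ => 1867/2000) j) i)).map
        (algebraMap ℝ ℂ) with hM
    have hdet : M.det = 0 := by
      by_contra h
      exact hnu ((Matrix.isUnit_iff_isUnit_det M).mpr (isUnit_iff_ne_zero.mpr h))
    have hdet2 : M.det = M iL iL * M iR iR - M iL iR * M iR iL := by
      rw [← Matrix.det_submatrix_equiv_self (finSumFinEquiv (m := 1) (n := 1)).symm M,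
        Matrix.det_fin_two]
      rfl
    have hent : M iL iL = kk - ((50371:ℝ)/50000 : ℂ) ∧ M iR iR = kk - ((1867:ℝ)/2000 : ℂ) ∧
        M iL iR = -(((-77:ℝ)/2500 : ℂ)) ∧ M iR iL = -(((77:ℝ)/2500 : ℂ)) := by
      refine ⟨?_, ?_, ?_, ?_⟩ <;>
        simp [hM, Matrix.algebraMap_matrix_apply, Matrix.map_apply, Matrix.sub_apply] <;>
        push_cast <;> ring
    have hq : kk^2 - (48523/25000)*kk + 94137521/100000000 = 0 := by
      rw [hdet2, hent.1, hent.2.1, hent.2.2.1, hent.2.2.2] at hdet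
      push_cast at hdet
      linear_combination hdet
    have hw2 : (2*kk - 48523/25000)^2 = (((65219:ℝ)/39062500 : ℝ) : ℂ) := by
      push_cast
      linear_combination 4*hq
    have him : kk.im = 0 := by
      have h1 : ((2*kk - 48523/25000)^2).im = 0 := by rw [hw2]; exact Complex.ofReal_im _
      have h2 : ((2*kk - 48523/25000)^2).re = 65219/39062500 := by
        rw [hw2]; simp
      set w : ℂ := 2*kk - 48523/25000 with hwdef
      rw [sq, Complex.mul_im] at h1
      rw [sq, Complex.mul_re] at h2
      have hwim : w.im = 0 := by
        by_contra h
        have hre : w.re = 0 := by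
          rcases mul_eq_zero.mp (by linarith : w.re * w.im = 0) with h' | h'
          · exact h'
          · exact absurd h' h
        rw [hre] at h2
        nlinarith [mul_self_nonneg w.im]
      have : w.im = 2*kk.im := by
        simp [hwdef, Complex.sub_im, Complex.mul_im]
      linarith [this ▸ hwim]
    have hkre : kk = ((kk.re : ℝ) : ℂ) := Complex.ext (by simp) (by simp [him])
    have hx : (kk.re)^2 - (48523/25000)*kk.re + 94137521/100000000 = 0 := by
      have h2 : ((kk.re^2 - 48523/25000*kk.re + 94137521/100000000 : ℝ) : ℂ) = 0 := by
        push_cast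
        rw [← hkre]
        linear_combination hq
      exact_mod_cast h2
    have habs : ‖kk‖ = |kk.re| := by
      conv_lhs => rw [hkre]
      rw [Complex.norm_real, Real.norm_eq_abs]
    rw [habs, abs_lt]
    constructor
    · nlinarith [hx, sq_nonneg (kk.re + 1)]
    · nlinarith [hx, sq_nonneg (kk.re - 1)]
  · -- asymptotic stability
    have hLam : Lam 1 1 1 = 1 := by
      have he : (Sum.elim (fun _ => 1/(1:ℝ)) (fun _ => 1) : (Fin 1 ⊕ Fin 1) → ℝ) =
          fun _ => 1 := by
        funext i; rcases i with i | i <;> norm_num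
      rw [Lam, he, Matrix.diagonal_one]
    have hmulE : ∀ v : Spc 1 1, mulVecE (1 : Matrix (Fin 1 ⊕ Fin 1) (Fin 1 ⊕ Fin 1) ℝ) v = v := by
      intro v
      simp only [mulVecE, Matrix.one_mulVec]
      rfl
    have hFvec : ∀ z : Spc 1 1, Fvec f z =
        ofVec (Sum.elim (fun _ => -(1/5)*z iL + (1/2)*z iR) (fun _ => z iR - (1/2)*z iL)) := by
      intro z
      ext i
      rcases i with i | i <;>
        simp only [Fvec, ofVec_apply, Sum.elim_inl, Sum.elim_inr, hgrad z] <;> ring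
    have hgeg : ∀ z : Spc 1 1, ((geg f 0.7 1 0.2 z) iL = (50371/50000)*z iL + (-77/2500)*z iR)
        ∧ ((geg f 0.7 1 0.2 z) iR = (77/2500)*z iL + (1867/2000)*z iR) := by
      intro z
      have hz' : ∀ i, (z - (0.7:ℝ) • mulVecE (Lam 1 1 1) (Fvec f z)) i =
          Sum.elim (fun _ : Fin 1 => (57/50)*z iL - (7/20)*z iR)
                   (fun _ : Fin 1 => (7/20)*z iL + (3/10)*z iR) i := by
        intro i
        rw [hLam, hmulE, hFvec]
        rcases i with i | i <;> obtain rfl := Fin.eq_zero i <;>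
          simp only [PiLp.sub_apply, PiLp.smul_apply, smul_eq_mul, ofVec_apply,
            Sum.elim_inl, Sum.elim_inr] <;> ring
      constructor <;>
      · simp only [geg, hLam, hmulE, PiLp.sub_apply, PiLp.smul_apply, smul_eq_mul,
          hFvec, ofVec_apply, Sum.elim_inl, Sum.elim_inr, hz']
        ring
    set g := geg f 0.7 1 0.2 with hg
    have key1 : ∀ w : Spc 1 1, Vq ((g w) iL) ((g w) iR) ≤ (199/200)^2 * Vq (w iL) (w iR) :=
      fun w => lyap_dec (w iL) (w iR) _ _ (hgeg w).1 (hgeg w).2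
    have hit : ∀ z : Spc 1 1, ∀ k : ℕ,
        Vq ((g^[k] z) iL) ((g^[k] z) iR) ≤ ((199/200:ℝ)^k)^2 * Vq (z iL) (z iR) := by
      intro z k
      induction k with
      | zero => simp
      | succ k ih =>
        rw [Function.iterate_succ_apply']
        calc Vq ((g (g^[k] z)) iL) ((g (g^[k] z)) iR)
            ≤ (199/200)^2 * Vq ((g^[k] z) iL) ((g^[k] z) iR) := key1 _
          _ ≤ (199/200)^2 * (((199/200:ℝ)^k)^2 * Vq (z iL) (z iR)) := by
              have : (0:ℝ) ≤ (199/200)^2 := by positivity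
              exact mul_le_mul_of_nonneg_left ih this
          _ = ((199/200:ℝ)^(k+1))^2 * Vq (z iL) (z iR) := by ring
    have bnd : ∀ z : Spc 1 1, ∀ k : ℕ,
        ‖g^[k] z‖^2 ≤ 34 * ((199/200:ℝ)^k)^2 * ‖z‖^2 := by
      intro z k
      have h1 : 10 * ‖g^[k] z‖^2 ≤ Vq ((g^[k] z) iL) ((g^[k] z) iR) := by
        rw [norm_sq_eq]
        simpa using lyap_low ((g^[k] z) iL) ((g^[k] z) iR)
      have h2 := hit z k
      have h3 : Vq (z iL) (z iR) ≤ 340*‖z‖^2 := by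
        rw [norm_sq_eq]
        simpa using lyap_up (z iL) (z iR)
      have h4 : ((199/200:ℝ)^k)^2 * Vq (z iL) (z iR) ≤ ((199/200:ℝ)^k)^2 * (340*‖z‖^2) :=
        mul_le_mul_of_nonneg_left h3 (by positivity)
      nlinarith
    constructor
    · intro ε hε
      refine ⟨ε/6, by positivity, fun z₀ hz k => ?_⟩
      rw [dist_zero_right] at hz ⊢
      have hb := bnd z₀ k
      have hk1 : ((199/200:ℝ)^k)^2 ≤ 1 := by
        have h1 : (199/200:ℝ)^k ≤ 1 := pow_le_one₀ (by norm_num) (by norm_num)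
        nlinarith [pow_nonneg (by norm_num : (0:ℝ) ≤ 199/200) k]
      have h5 : ‖z₀‖^2 ≤ (ε/6)^2 := by nlinarith [norm_nonneg z₀]
      have h6 : ‖g^[k] z₀‖^2 ≤ 34*(ε/6)^2 := by
        nlinarith [sq_nonneg ‖z₀‖, pow_nonneg (by norm_num : (0:ℝ) ≤ 199/200) k,
          sq_nonneg ((199/200:ℝ)^k)]
      nlinarith [norm_nonneg (g^[k] z₀)]
    · refine ⟨1, one_pos, fun z₀ hz => ?_⟩
      rw [dist_zero_right] at hz
      rw [tendsto_zero_iff_norm_tendsto_zero]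
      have htend : Filter.Tendsto (fun k : ℕ => 6*(199/200:ℝ)^k) Filter.atTop (nhds 0) := by
        have := (tendsto_pow_atTop_nhds_zero_of_lt_one
          (by norm_num : (0:ℝ) ≤ 199/200) (by norm_num : (199/200:ℝ) < 1)).const_mul (6:ℝ)
        simpa using this
      refine squeeze_zero (fun k => norm_nonneg _) (fun k => ?_) htend
      have hb := bnd z₀ k
      have hz2 : ‖z₀‖^2 ≤ 1 := by nlinarith [norm_nonneg z₀]
      nlinarith [norm_nonneg (g^[k] z₀), pow_nonneg (by norm_num : (0:ℝ) ≤ 199/200) k,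
        sq_nonneg ((199/200:ℝ)^k), sq_nonneg ‖z₀‖]
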